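/- Let B be a von Neumann algebra on a complex Hilbert space G, let E ⊆ B(G,H) be a concrete von Neumann B-module, and let A = {a ∈ B(H) : a∘x ∈ E and a*∘x ∈ E for all x ∈ E}. On the Hilbert space direct sum G ⊕ H, let M be the set of all operators of the form (g,h) ↦ (b g + y* h, x g + a h) with b ∈ B, x, y ∈ E, a ∈ A (the linking algebra of E). Then an operator S ∈ B(G ⊕ H) commutes with every element of M if and only if there exist b' ∈ B' and c ∈ B(H) with c ∘ x = x ∘ b' for all x ∈ E such that S(g,h) = (b' g, c h) for all g ∈ G, h ∈ H. -/

import Mathlib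

noncomputable section

variable {G H K : Type*}
  [NormedAddCommGroup G] [InnerProductSpace ℂ G] [CompleteSpace G]
  [NormedAddCommGroup H] [InnerProductSpace ℂ H] [CompleteSpace H]
  [NormedAddCommGroup K] [InnerProductSpace ℂ K] [CompleteSpace K]

/-- The weak operator topology on `G →L[ℂ] H`: the coarsest topology making all the maps
`T ↦ ⟨h, T g⟩` continuous. -/
def wot (G H : Type*) [NormedAddCommGroup G] [InnerProductSpace ℂ G]
    [NormedAddCommGroup H] [InnerProductSpace ℂ H] : TopologicalSpace (G →L[ℂ] H) :=
  ⨅ p : G × H, TopologicalSpace.induced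
    (fun T : G →L[ℂ] H => (inner ℂ p.2 (T p.1) : ℂ)) inferInstance

/-- The set `{x g : x ∈ E, g ∈ G}` spans a dense subspace of `H`. -/
def SpansDensely (E : Set (G →L[ℂ] H)) : Prop :=
  Dense ((Submodule.span ℂ {h : H | ∃ x ∈ E, ∃ g : G, x g = h} : Submodule ℂ H) : Set H)

/-- `E ⊆ B(G,H)` is a concrete von Neumann `B`-module: a complex linear subspace, stable under
composition with elements of `B` from the right, with `x* ∘ y ∈ B` for all `x, y ∈ E`, acting
nondegenerately on `G`, and closed in the weak operator topology. -/
structure IsConcreteVNModule (B : VonNeumannAlgebra G) (E : Set (G →L[ℂ] H)) : Prop where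
  zero_mem : (0 : G →L[ℂ] H) ∈ E
  add_mem : ∀ x ∈ E, ∀ y ∈ E, x + y ∈ E
  smul_mem : ∀ (c : ℂ), ∀ x ∈ E, c • x ∈ E
  comp_mem : ∀ x ∈ E, ∀ b ∈ B, x.comp b ∈ E
  adjoint_comp_mem : ∀ x ∈ E, ∀ y ∈ E, (ContinuousLinearMap.adjoint x).comp y ∈ B
  dense : SpansDensely E
  isClosed : @IsClosed _ (wot G H) E

/-- A map `ρ : B(G) → B(H)` restricts on the subset `S ⊆ B(G)` to a normal unital
`*`-homomorphism: it is linear, multiplicative and star-preserving on `S`, unital, and its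
restriction to the closed unit ball of `S` is continuous from the weak operator topology of
`B(G)` to the weak operator topology of `B(H)`. -/
structure IsNormalUnitalStarHom (S : Set (G →L[ℂ] G)) (ρ : (G →L[ℂ] G) → (H →L[ℂ] H)) :
    Prop where
  map_add : ∀ a ∈ S, ∀ b ∈ S, ρ (a + b) = ρ a + ρ b
  map_smul : ∀ (c : ℂ), ∀ a ∈ S, ρ (c • a) = c • ρ a
  map_mul : ∀ a ∈ S, ∀ b ∈ S, ρ (a * b) = ρ a * ρ b
  map_star : ∀ a ∈ S, ρ (star a) = star (ρ a)
  map_one : ρ 1 = 1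
  normal : @Continuous {b : G →L[ℂ] G // b ∈ S ∧ ‖b‖ ≤ 1} (H →L[ℂ] H)
    (TopologicalSpace.induced (fun b => b.1) (wot G G)) (wot H H) (fun b => ρ b.1)

/-- The space of intertwiners: `x ∈ B(G,H)` with `ρ(b') ∘ x = x ∘ b'` for all `b' ∈ S`. -/
def intertwinerSpace (S : Set (G →L[ℂ] G)) (ρ : (G →L[ℂ] G) → (H →L[ℂ] H)) :
    Set (G →L[ℂ] H) :=
  {x | ∀ b' ∈ S, (ρ b').comp x = x.comp b'}

/-- The operator `(g,h) ↦ (b g + c h, x g + a h)` on the Hilbert direct sum `G ⊕ H`. -/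
def blockOp (b : G →L[ℂ] G) (c : H →L[ℂ] G) (x : G →L[ℂ] H) (a : H →L[ℂ] H) :
    WithLp 2 (G × H) →L[ℂ] WithLp 2 (G × H) :=
  (((WithLp.prodContinuousLinearEquiv 2 ℂ G H).symm : G × H →L[ℂ] WithLp 2 (G × H)).comp
      (((b.comp (ContinuousLinearMap.fst ℂ G H) + c.comp (ContinuousLinearMap.snd ℂ G H)).prod
        (x.comp (ContinuousLinearMap.fst ℂ G H) +
          a.comp (ContinuousLinearMap.snd ℂ G H))))).comp
    ((WithLp.prodContinuousLinearEquiv 2 ℂ G H : WithLp 2 (G × H) ≃L[ℂ] G × H) :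
      WithLp 2 (G × H) →L[ℂ] G × H)


/-!
Commuting with the projection `blockOp 1 0 0 0` onto `G` forces `S` to be diagonal, `S = b' ⊕ c`,
and a diagonal operator commutes with `blockOp b y* x a` exactly when the four corner relations
`b' b = b b'`, `b' y* = y* c`, `c x = x b'`, `c a = a c` hold. For the converse, the last two
relations follow from `c x = x b'` because both sides can be tested against the dense set of
vectors `z g` with `z ∈ E`: on them `c a (z g) = a z (b' g) = a c (z g)`, and
`⟪z g', c* y g⟫ = ⟪b' g', z* y g⟫ = ⟪z g', y b'* g⟫` since `z* y ∈ B` commutes with `b'* ∈ B'`.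
-/

open ContinuousLinearMap
open scoped InnerProductSpace

section BlockOperator

variable {U V : Type*} [NormedAddCommGroup U] [InnerProductSpace ℂ U]
  [NormedAddCommGroup V] [InnerProductSpace ℂ V]

@[simp]
lemma blockOp_toLp (b : U →L[ℂ] U) (c : V →L[ℂ] U) (x : U →L[ℂ] V) (a : V →L[ℂ] V)
    (g : U) (h : V) :
    blockOp b c x a (WithLp.toLp 2 (g, h)) = WithLp.toLp 2 (b g + c h, x g + a h) := rfl

lemma ContinuousLinearMap.ext_toLp_prod {S T : WithLp 2 (U × V) →L[ℂ] WithLp 2 (U × V)}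
    (hST : ∀ (g : U) (h : V), S (WithLp.toLp 2 (g, h)) = T (WithLp.toLp 2 (g, h))) : S = T :=
  ext fun v => hST v.fst v.snd

lemma blockOp_mul (b₁ b₂ : U →L[ℂ] U) (c₁ c₂ : V →L[ℂ] U) (x₁ x₂ : U →L[ℂ] V)
    (a₁ a₂ : V →L[ℂ] V) :
    blockOp b₁ c₁ x₁ a₁ * blockOp b₂ c₂ x₂ a₂ =
      blockOp (b₁ ∘L b₂ + c₁ ∘L x₂) (b₁ ∘L c₂ + c₁ ∘L a₂)
        (x₁ ∘L b₂ + a₁ ∘L x₂) (x₁ ∘L c₂ + a₁ ∘L a₂) := by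
  refine ext_toLp_prod fun g h => ?_
  simp only [mul_apply_eq_comp, blockOp_toLp, add_apply, coe_comp, Function.comp_apply, map_add]
  congr 2 <;> abel

lemma blockOp_inj {b₁ b₂ : U →L[ℂ] U} {c₁ c₂ : V →L[ℂ] U} {x₁ x₂ : U →L[ℂ] V}
    {a₁ a₂ : V →L[ℂ] V} :
    blockOp b₁ c₁ x₁ a₁ = blockOp b₂ c₂ x₂ a₂ ↔ b₁ = b₂ ∧ c₁ = c₂ ∧ x₁ = x₂ ∧ a₁ = a₂ := by
  refine ⟨fun heq => ?_, by rintro ⟨rfl, rfl, rfl, rfl⟩; rfl⟩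
  have hU (g : U) := congr(WithLp.ofLp ($heq (WithLp.toLp 2 (g, 0))))
  have hV (h : V) := congr(WithLp.ofLp ($heq (WithLp.toLp 2 (0, h))))
  simp only [blockOp_toLp, map_zero, add_zero, zero_add, Prod.mk.injEq] at hU hV
  exact ⟨ext fun g => (hU g).1, ext fun h => (hV h).1, ext fun g => (hU g).2,
    ext fun h => (hV h).2⟩

lemma exists_eq_blockOp (S : WithLp 2 (U × V) →L[ℂ] WithLp 2 (U × V)) :
    ∃ b c x a, S = blockOp b c x a := by
  let toLp : U × V →L[ℂ] WithLp 2 (U × V) := (WithLp.prodContinuousLinearEquiv 2 ℂ U V).symm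
  refine ⟨WithLp.fstL 2 ℂ U V ∘L S ∘L toLp ∘L inl ℂ U V,
    WithLp.fstL 2 ℂ U V ∘L S ∘L toLp ∘L inr ℂ U V,
    WithLp.sndL 2 ℂ U V ∘L S ∘L toLp ∘L inl ℂ U V,
    WithLp.sndL 2 ℂ U V ∘L S ∘L toLp ∘L inr ℂ U V, ext_toLp_prod fun g h => ?_⟩
  have hsplit : WithLp.toLp 2 (g, h) = WithLp.toLp 2 (g, 0) + WithLp.toLp 2 ((0 : U), h) := by
    rw [← WithLp.toLp_add, Prod.mk_add_mk, add_zero, zero_add]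
  rw [blockOp_toLp, hsplit, map_add]
  rfl

lemma exists_eq_blockOp_diag_of_commute {S : WithLp 2 (U × V) →L[ℂ] WithLp 2 (U × V)}
    (hS : S * blockOp 1 0 0 0 = blockOp 1 0 0 0 * S) : ∃ b' c, S = blockOp b' 0 0 c := by
  obtain ⟨b, c, x, a, rfl⟩ := exists_eq_blockOp S
  simp only [blockOp_mul, blockOp_inj, one_def, comp_id, id_comp, comp_zero, zero_comp,
    add_zero] at hS
  obtain ⟨-, rfl, rfl, -⟩ := hS
  exact ⟨b, a, rfl⟩

lemma blockOp_diag_commute_iff {b' b : U →L[ℂ] U} {c a : V →L[ℂ] V} {y : V →L[ℂ] U}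
    {x : U →L[ℂ] V} :
    blockOp b' 0 0 c * blockOp b y x a = blockOp b y x a * blockOp b' 0 0 c ↔
      b' ∘L b = b ∘L b' ∧ b' ∘L y = y ∘L c ∧ c ∘L x = x ∘L b' ∧ c ∘L a = a ∘L c := by
  simp only [blockOp_mul, blockOp_inj, comp_zero, zero_comp, add_zero, zero_add]

lemma SpansDensely.ext_inner {E : Set (U →L[ℂ] V)} (hE : SpansDensely E) {v w : V}
    (h : ∀ x ∈ E, ∀ g, ⟪x g, v⟫_ℂ = ⟪x g, w⟫_ℂ) : v = w := by
  have hinner : innerSL ℂ v = innerSL ℂ w := by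
    refine ext_on hE ?_
    rintro _ ⟨x, hx, g, rfl⟩
    rw [innerSL_apply_apply, innerSL_apply_apply, ← inner_conj_symm, h x hx g, inner_conj_symm]
  exact ext_inner_right ℂ fun u => by simpa using congr($hinner u)

lemma comp_comm_of_comp_mem {E : Set (U →L[ℂ] V)} (hE : SpansDensely E) {b' : U →L[ℂ] U}
    {c a : V →L[ℂ] V} (hc : ∀ x ∈ E, c ∘L x = x ∘L b') (ha : ∀ x ∈ E, a ∘L x ∈ E) :
    c ∘L a = a ∘L c := by
  refine ext_on hE ?_
  rintro _ ⟨x, hx, g, rfl⟩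
  simp only [comp_apply]
  rw [← comp_apply a x, ← comp_apply c, hc _ (ha x hx), ← comp_apply c, hc x hx]
  rfl

end BlockOperator

lemma comp_adjoint_eq_adjoint_comp {B : VonNeumannAlgebra G} {E : Set (G →L[ℂ] H)}
    (hE : SpansDensely E) (hEB : ∀ x ∈ E, ∀ y ∈ E, adjoint x ∘L y ∈ B) {b' : G →L[ℂ] G}
    (hb' : b' ∈ B.commutant) {c : H →L[ℂ] H} (hc : ∀ x ∈ E, c ∘L x = x ∘L b')
    {y : G →L[ℂ] H} (hy : y ∈ E) :
    b' ∘L adjoint y = adjoint y ∘L c := by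
  have hstar : adjoint c ∘L y = y ∘L adjoint b' := by
    refine ext fun g => hE.ext_inner fun z hz g' => ?_
    have hzy : adjoint b' * (adjoint z ∘L y) = adjoint z ∘L y * adjoint b' :=
      (VonNeumannAlgebra.mem_commutant_iff.1 (star_mem hb') _ (hEB z hz y hy)).symm
    calc ⟪z g', (adjoint c ∘L y) g⟫_ℂ = ⟪z (b' g'), y g⟫_ℂ := by
          rw [comp_apply, adjoint_inner_right, ← comp_apply c, hc z hz, comp_apply]
      _ = ⟪g', (adjoint b' * (adjoint z ∘L y)) g⟫_ℂ := by
          rw [mul_apply_eq_comp, comp_apply, adjoint_inner_right, ← adjoint_inner_right z]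
      _ = ⟪z g', (y ∘L adjoint b') g⟫_ℂ := by
          rw [hzy, mul_apply_eq_comp, comp_apply, adjoint_inner_right, comp_apply]
  simpa only [adjoint_comp, adjoint_adjoint] using congr(adjoint $hstar).symm

/-- an operator `S` on `G ⊕ H` commutes with every element of the linking
algebra of a concrete von Neumann `B`-module `E` if and only if it is diagonal, of the form
`(g,h) ↦ (b' g, c h)` with `b' ∈ B'` and `c ∘ x = x ∘ b'` for all `x ∈ E`. -/
theorem stmt12 (B : VonNeumannAlgebra G) (E : Set (G →L[ℂ] H))
    (hE : IsConcreteVNModule B E)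
    (S : WithLp 2 (G × H) →L[ℂ] WithLp 2 (G × H)) :
    (∀ b ∈ B, ∀ x ∈ E, ∀ y ∈ E, ∀ a : H →L[ℂ] H,
        (∀ z ∈ E, a.comp z ∈ E ∧ (ContinuousLinearMap.adjoint a).comp z ∈ E) →
        S * blockOp b (ContinuousLinearMap.adjoint y) x a
          = blockOp b (ContinuousLinearMap.adjoint y) x a * S)
      ↔ ∃ b' ∈ B.commutant, ∃ c : H →L[ℂ] H,
          (∀ x ∈ E, c.comp x = x.comp b') ∧ S = blockOp b' 0 0 c := by
  constructor
  · intro hS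
    have hcomm (b) (hb : b ∈ B) (x) (hx : x ∈ E) : S * blockOp b 0 x 0 = blockOp b 0 x 0 * S := by
      simpa using hS b hb x hx 0 hE.zero_mem 0 fun z _ => by simp [hE.zero_mem]
    obtain ⟨b', c, rfl⟩ := exists_eq_blockOp_diag_of_commute (hcomm 1 (one_mem B) 0 hE.zero_mem)
    refine ⟨b', VonNeumannAlgebra.mem_commutant_iff.2 fun b hb => ?_, c,
      fun x hx => (blockOp_diag_commute_iff.1 (hcomm 0 (zero_mem B) x hx)).2.2.1, rfl⟩
    exact (blockOp_diag_commute_iff.1 (hcomm b hb 0 hE.zero_mem)).1.symm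
  · rintro ⟨b', hb', c, hc, rfl⟩ b hb x hx y hy a ha
    exact blockOp_diag_commute_iff.2
      ⟨(VonNeumannAlgebra.mem_commutant_iff.1 hb' b hb).symm,
        comp_adjoint_eq_adjoint_comp hE.dense hE.adjoint_comp_mem hb' hc hy, hc x hx,
        comp_comm_of_comp_mem hE.dense hc fun z hz => (ha z hz).1⟩
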